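/- arXiv:1810.07147 — 2 statements merged into one kernel-verified Lean document; each statement's English description precedes it below -/
import Mathlib

section
/- (Feasibility of the true parameters for the JNE constraints). Let p, n be positive integers, δ > 0, C_M > 0, C_R > 0. Let Σ¹,…,Σⁿ be invertible real p×p matrices, and for each i suppose (Σᶦ)⁻¹ = M + Rᶦ where M and the Rᶦ are p×p matrices with ‖M‖_{L1} ≤ C_M and ‖Rᶦ‖_{L1} ≤ C_R. Let S¹,…,Sⁿ be p×p matrices with |Sᶦ − Σᶦ|_∞ ≤ δ for every i. Then for every i = 1,…,n, |I − Sᶦ(M + Rᶦ)|_∞ ≤ (C_M + C_R) δ; in particular, if additionally Σ_{i=1}^n Rᶦ = 0, then (M, R¹,…,Rⁿ) satisfies the JNE constraints with λ = (C_M + C_R) δ. -/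
open Finset Matrix

/-- Entrywise `ℓ∞` norm of a matrix: the maximum absolute value of its entries. -/
noncomputable def supAbs {p : ℕ} (A : Matrix (Fin p) (Fin p) ℝ) : ℝ :=
  ⨆ i, ⨆ j, |A i j|

/-- The `L1` matrix norm: the maximum over columns of the sum of the absolute values
of the entries in that column. -/
noncomputable def colL1 {p : ℕ} (A : Matrix (Fin p) (Fin p) ℝ) : ℝ :=
  ⨆ j, ∑ i, |A i j|

/-- The JNE feasibility constraints: `|Sᶦ (M + Rᶦ) - I|_∞ ≤ λ` for all `i`, and
`∑ᵢ Rᶦ = 0`. -/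
def JNEFeasible {p n : ℕ} (S : Fin n → Matrix (Fin p) (Fin p) ℝ) (lam : ℝ)
    (M : Matrix (Fin p) (Fin p) ℝ) (R : Fin n → Matrix (Fin p) (Fin p) ℝ) : Prop :=
  (∀ i, supAbs (S i * (M + R i) - 1) ≤ lam) ∧ ∑ i, R i = 0

/-! Since `Σᶦ(M + Rᶦ) = I`, the defect `I - Sᶦ(M + Rᶦ) = (Σᶦ - Sᶦ)(M + Rᶦ)` is a product, and
the entrywise sup norm of a product is at most the entrywise sup norm of the left factor times
the column-`L1` norm of the right factor. -/

section

variable {p : ℕ}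

lemma abs_le_supAbs (A : Matrix (Fin p) (Fin p) ℝ) (i j : Fin p) : |A i j| ≤ supAbs A :=
  (le_ciSup (Set.finite_range fun j => |A i j|).bddAbove j).trans
    (le_ciSup (Set.finite_range fun i => ⨆ j, |A i j|).bddAbove i)

lemma supAbs_nonneg (A : Matrix (Fin p) (Fin p) ℝ) : 0 ≤ supAbs A :=
  Real.iSup_nonneg fun _ => Real.iSup_nonneg fun _ => abs_nonneg _

lemma supAbs_le {A : Matrix (Fin p) (Fin p) ℝ} {c : ℝ} (h : ∀ i j, |A i j| ≤ c) (hc : 0 ≤ c) :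
    supAbs A ≤ c :=
  Real.iSup_le (fun i => Real.iSup_le (h i) hc) hc

lemma supAbs_neg (A : Matrix (Fin p) (Fin p) ℝ) : supAbs (-A) = supAbs A := by
  simp only [supAbs, Matrix.neg_apply, abs_neg]

lemma sum_abs_le_colL1 (A : Matrix (Fin p) (Fin p) ℝ) (j : Fin p) : ∑ i, |A i j| ≤ colL1 A :=
  le_ciSup (Set.finite_range fun j => ∑ i, |A i j|).bddAbove j

lemma colL1_nonneg (A : Matrix (Fin p) (Fin p) ℝ) : 0 ≤ colL1 A :=
  Real.iSup_nonneg fun _ => sum_nonneg fun _ _ => abs_nonneg _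

lemma colL1_add_le (A B : Matrix (Fin p) (Fin p) ℝ) : colL1 (A + B) ≤ colL1 A + colL1 B := by
  refine Real.iSup_le (fun j => ?_) (add_nonneg (colL1_nonneg A) (colL1_nonneg B))
  calc ∑ i, |(A + B) i j| ≤ ∑ i, (|A i j| + |B i j|) := sum_le_sum fun i _ => abs_add_le _ _
    _ = ∑ i, |A i j| + ∑ i, |B i j| := by rw [sum_add_distrib]
    _ ≤ colL1 A + colL1 B := add_le_add (sum_abs_le_colL1 A j) (sum_abs_le_colL1 B j)

lemma supAbs_mul_le (A B : Matrix (Fin p) (Fin p) ℝ) : supAbs (A * B) ≤ supAbs A * colL1 B := by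
  refine supAbs_le (fun i k => ?_) (mul_nonneg (supAbs_nonneg A) (colL1_nonneg B))
  calc |(A * B) i k| ≤ ∑ j, |A i j| * |B j k| := by
        simpa only [mul_apply, abs_mul] using abs_sum_le_sum_abs (fun j => A i j * B j k) univ
    _ ≤ ∑ j, supAbs A * |B j k| :=
        sum_le_sum fun j _ => mul_le_mul_of_nonneg_right (abs_le_supAbs A i j) (abs_nonneg _)
    _ = supAbs A * ∑ j, |B j k| := (mul_sum _ _ _).symm
    _ ≤ supAbs A * colL1 B := mul_le_mul_of_nonneg_left (sum_abs_le_colL1 B k) (supAbs_nonneg A)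

lemma supAbs_one_sub_mul_inv_le (Sig S : Matrix (Fin p) (Fin p) ℝ) (hSig : IsUnit Sig) :
    supAbs (1 - S * Sig⁻¹) ≤ supAbs (S - Sig) * colL1 Sig⁻¹ := by
  have hdefect : 1 - S * Sig⁻¹ = -((S - Sig) * Sig⁻¹) := by
    rw [sub_mul, mul_nonsing_inv Sig ((isUnit_iff_isUnit_det Sig).mp hSig), neg_sub]
  rw [hdefect, supAbs_neg]
  exact supAbs_mul_le _ _

end

theorem true_params_feasible_general {p n : ℕ}
    (δ CM CR : ℝ)
    (Sig : Fin n → Matrix (Fin p) (Fin p) ℝ)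
    (hSigUnit : ∀ i, IsUnit (Sig i))
    (M : Matrix (Fin p) (Fin p) ℝ) (R : Fin n → Matrix (Fin p) (Fin p) ℝ)
    (hinv : ∀ i, (Sig i)⁻¹ = M + R i)
    (hM : colL1 M ≤ CM) (hR : ∀ i, colL1 (R i) ≤ CR)
    (S : Fin n → Matrix (Fin p) (Fin p) ℝ)
    (hS : ∀ i, supAbs (S i - Sig i) ≤ δ) :
    (∀ i, supAbs (1 - S i * (M + R i)) ≤ (CM + CR) * δ) ∧
      (∑ i, R i = 0 → JNEFeasible S ((CM + CR) * δ) M R) := by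
  have hdefect : ∀ i, supAbs (1 - S i * (M + R i)) ≤ (CM + CR) * δ := fun i => by
    rw [← hinv i, mul_comm (CM + CR)]
    calc supAbs (1 - S i * (Sig i)⁻¹) ≤ supAbs (S i - Sig i) * colL1 (Sig i)⁻¹ :=
          supAbs_one_sub_mul_inv_le _ _ (hSigUnit i)
      _ ≤ δ * (CM + CR) := by
          refine mul_le_mul (hS i) ?_ (colL1_nonneg _) ((supAbs_nonneg _).trans (hS i))
          rw [hinv i]
          exact (colL1_add_le M (R i)).trans (add_le_add hM (hR i))
  refine ⟨hdefect, fun hsum => ⟨fun i => ?_, hsum⟩⟩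
  rw [← neg_sub, supAbs_neg]
  exact hdefect i

/-- **Feasibility of the true parameters for the JNE constraints.**
If each `Σᶦ` is invertible with `(Σᶦ)⁻¹ = M + Rᶦ`, `‖M‖_{L1} ≤ C_M`, `‖Rᶦ‖_{L1} ≤ C_R`,
and `|Sᶦ - Σᶦ|_∞ ≤ δ`, then `|I - Sᶦ (M + Rᶦ)|_∞ ≤ (C_M + C_R) δ` for every `i`; in
particular, if `∑ᵢ Rᶦ = 0` then `(M, R¹, …, Rⁿ)` satisfies the JNE constraints with
`λ = (C_M + C_R) δ`. -/
theorem true_params_feasible {p n : ℕ} (hp : 0 < p) (hn : 0 < n)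
    (δ CM CR : ℝ) (hδ : 0 < δ) (hCM : 0 < CM) (hCR : 0 < CR)
    (Sig : Fin n → Matrix (Fin p) (Fin p) ℝ)
    (hSigUnit : ∀ i, IsUnit (Sig i))
    (M : Matrix (Fin p) (Fin p) ℝ) (R : Fin n → Matrix (Fin p) (Fin p) ℝ)
    (hinv : ∀ i, (Sig i)⁻¹ = M + R i)
    (hM : colL1 M ≤ CM) (hR : ∀ i, colL1 (R i) ≤ CR)
    (S : Fin n → Matrix (Fin p) (Fin p) ℝ)
    (hS : ∀ i, supAbs (S i - Sig i) ≤ δ) :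
    (∀ i, supAbs (1 - S i * (M + R i)) ≤ (CM + CR) * δ) ∧
      (∑ i, R i = 0 → JNEFeasible S ((CM + CR) * δ) M R) :=
  true_params_feasible_general δ CM CR Sig hSigUnit M R hinv hM hR S hS
end

section
/- (Objective bound at any JNE minimizer). Let p, n be positive integers, δ > 0, C_M > 0, C_R > 0, and λ = (C_M + C_R) δ. Let Σ¹,…,Σⁿ be invertible real p×p matrices with (Σᶦ)⁻¹ = M + Rᶦ, where ‖M‖_{L1} ≤ C_M, ‖Rᶦ‖_{L1} ≤ C_R and Σ_{i=1}^n Rᶦ = 0, and let S¹,…,Sⁿ satisfy |Sᶦ − Σᶦ|_∞ ≤ δ for every i. Then any minimizer (Ω̂, R̂¹,…,R̂ⁿ) of the JNE optimization problem with data S¹,…,Sⁿ and tuning parameter λ satisfies ‖Ω̂‖_{L1} + (1/n) Σ_{i=1}^n ‖R̂ᶦ‖_{L1} ≤ C_M + C_R; in particular, for every column index j, |Ω̂_{*j}|₁ + (1/n) Σ_{i=1}^n |R̂ᶦ_{*j}|₁ ≤ C_M + C_R. -/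
/-!
The true parameters `(M, R¹, …, Rⁿ)` are feasible for the JNE program: since `Σᶦ (M + Rᶦ) = I`,
the constraint residual is `Sᶦ (M + Rᶦ) - I = (Sᶦ - Σᶦ)(M + Rᶦ)`, whose entries are bounded by
`|Sᶦ - Σᶦ|_∞ ‖M + Rᶦ‖_{L1} ≤ δ (C_M + C_R) = λ`. A minimizer therefore has objective at most that
of the truth, which is at most `C_M + C_R`; each column of the objective is dominated by the
objective itself.
-/

open Finset Matrix

/-- The `ℓ1` norm of a vector. -/
noncomputable def vecL1 {p : ℕ} (v : Fin p → ℝ) : ℝ := ∑ i, |v i|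

/-- The JNE objective `‖M‖_{L1} + (1/n) ∑ᵢ ‖Rᶦ‖_{L1}`. -/
noncomputable def JNEObjective {p n : ℕ} (M : Matrix (Fin p) (Fin p) ℝ)
    (R : Fin n → Matrix (Fin p) (Fin p) ℝ) : ℝ :=
  colL1 M + (1 / (n : ℝ)) * ∑ i, colL1 (R i)

/-- `(Ω̂, R̂¹, …, R̂ⁿ)` is a joint nonparametric estimator: a feasible minimizer of the
JNE objective. -/
def IsJNE {p n : ℕ} (S : Fin n → Matrix (Fin p) (Fin p) ℝ) (lam : ℝ)
    (Ohat : Matrix (Fin p) (Fin p) ℝ) (Rhat : Fin n → Matrix (Fin p) (Fin p) ℝ) : Prop :=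
  JNEFeasible S lam Ohat Rhat ∧
    ∀ M R, JNEFeasible S lam M R → JNEObjective Ohat Rhat ≤ JNEObjective M R

section MatrixNorms

variable {p : ℕ}

lemma vecL1_col_le_colL1 (A : Matrix (Fin p) (Fin p) ℝ) (j : Fin p) :
    vecL1 (fun i => A i j) ≤ colL1 A :=
  le_ciSup (Set.finite_range fun j => ∑ i, |A i j|).bddAbove j

lemma supAbs_mul_sub_one_le {S Sig Ω : Matrix (Fin p) (Fin p) ℝ} (h : Sig * Ω = 1) :
    supAbs (S * Ω - 1) ≤ supAbs (S - Sig) * colL1 Ω := by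
  rw [← h, ← sub_mul]
  exact supAbs_mul_le _ _

end MatrixNorms

lemma one_div_mul_sum_le_of_le {n : ℕ} (hn : 0 < n) {f : Fin n → ℝ} {c : ℝ}
    (hf : ∀ i, f i ≤ c) : (1 / (n : ℝ)) * ∑ i, f i ≤ c := by
  have hsum : ∑ i, f i ≤ n * c := by
    simpa using sum_le_card_nsmul univ f c fun i _ => hf i
  rw [one_div_mul_eq_div, div_le_iff₀ (by exact_mod_cast hn)]
  linarith

section JNE

variable {p n : ℕ}

lemma jneFeasible_of_inv_eq {δ CM CR : ℝ} {Sig S : Fin n → Matrix (Fin p) (Fin p) ℝ}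
    (hSigUnit : ∀ i, IsUnit (Sig i)) {M : Matrix (Fin p) (Fin p) ℝ}
    {R : Fin n → Matrix (Fin p) (Fin p) ℝ} (hinv : ∀ i, (Sig i)⁻¹ = M + R i)
    (hM : colL1 M ≤ CM) (hR : ∀ i, colL1 (R i) ≤ CR) (hRsum : ∑ i, R i = 0)
    (hS : ∀ i, supAbs (S i - Sig i) ≤ δ) :
    JNEFeasible S ((CM + CR) * δ) M R := by
  refine ⟨fun i => ?_, hRsum⟩
  have hone : Sig i * (M + R i) = 1 := by
    rw [← hinv i]
    exact mul_nonsing_inv _ ((isUnit_iff_isUnit_det _).mp (hSigUnit i))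
  have hcol : colL1 (M + R i) ≤ CM + CR := (colL1_add_le M (R i)).trans (add_le_add hM (hR i))
  calc supAbs (S i * (M + R i) - 1) ≤ supAbs (S i - Sig i) * colL1 (M + R i) :=
        supAbs_mul_sub_one_le hone
    _ ≤ δ * (CM + CR) :=
        mul_le_mul (hS i) hcol (colL1_nonneg _) ((supAbs_nonneg _).trans (hS i))
    _ = (CM + CR) * δ := mul_comm _ _

lemma JNEObjective_le (hn : 0 < n) {CM CR : ℝ} {M : Matrix (Fin p) (Fin p) ℝ}
    {R : Fin n → Matrix (Fin p) (Fin p) ℝ} (hM : colL1 M ≤ CM) (hR : ∀ i, colL1 (R i) ≤ CR) :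
    JNEObjective M R ≤ CM + CR :=
  add_le_add hM (one_div_mul_sum_le_of_le hn hR)

lemma vecL1_col_add_le_JNEObjective (M : Matrix (Fin p) (Fin p) ℝ)
    (R : Fin n → Matrix (Fin p) (Fin p) ℝ) (j : Fin p) :
    vecL1 (fun a => M a j) + (1 / (n : ℝ)) * ∑ i, vecL1 (fun a => R i a j) ≤ JNEObjective M R :=
  add_le_add (vecL1_col_le_colL1 M j) <| mul_le_mul_of_nonneg_left
    (sum_le_sum fun i _ => vecL1_col_le_colL1 (R i) j) (by positivity)

end JNE

theorem objective_bound_at_minimizer_general {p n : ℕ} (hn : 0 < n)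
    (δ CM CR lam : ℝ)
    (hlam : lam = (CM + CR) * δ)
    (Sig : Fin n → Matrix (Fin p) (Fin p) ℝ)
    (hSigUnit : ∀ i, IsUnit (Sig i))
    (M : Matrix (Fin p) (Fin p) ℝ) (R : Fin n → Matrix (Fin p) (Fin p) ℝ)
    (hinv : ∀ i, (Sig i)⁻¹ = M + R i)
    (hM : colL1 M ≤ CM) (hR : ∀ i, colL1 (R i) ≤ CR)
    (hRsum : ∑ i, R i = 0)
    (S : Fin n → Matrix (Fin p) (Fin p) ℝ)
    (hS : ∀ i, supAbs (S i - Sig i) ≤ δ)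
    (Ohat : Matrix (Fin p) (Fin p) ℝ) (Rhat : Fin n → Matrix (Fin p) (Fin p) ℝ)
    (hJNE : IsJNE S lam Ohat Rhat) :
    JNEObjective Ohat Rhat ≤ CM + CR ∧
      ∀ j : Fin p,
        vecL1 (fun a => Ohat a j) + (1 / (n : ℝ)) * ∑ i, vecL1 (fun a => Rhat i a j)
          ≤ CM + CR := by
  subst hlam
  have hfeas := jneFeasible_of_inv_eq hSigUnit hinv hM hR hRsum hS
  have hobj : JNEObjective Ohat Rhat ≤ CM + CR :=
    (hJNE.2 M R hfeas).trans (JNEObjective_le hn hM hR)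
  exact ⟨hobj, fun j => (vecL1_col_add_le_JNEObjective Ohat Rhat j).trans hobj⟩

/-- **Objective bound at any JNE minimizer.**
If the true parameters `(M, R¹, …, Rⁿ)` are feasible (which follows from
`(Σᶦ)⁻¹ = M + Rᶦ`, `|Sᶦ - Σᶦ|_∞ ≤ δ` and `λ = (C_M + C_R) δ`), then any JNE minimizer
`(Ω̂, R̂¹, …, R̂ⁿ)` satisfies `‖Ω̂‖_{L1} + (1/n) ∑ᵢ ‖R̂ᶦ‖_{L1} ≤ C_M + C_R`, and in
particular every column satisfies `|Ω̂_{*j}|₁ + (1/n) ∑ᵢ |R̂ᶦ_{*j}|₁ ≤ C_M + C_R`. -/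
theorem objective_bound_at_minimizer {p n : ℕ} (hp : 0 < p) (hn : 0 < n)
    (δ CM CR lam : ℝ) (hδ : 0 < δ) (hCM : 0 < CM) (hCR : 0 < CR)
    (hlam : lam = (CM + CR) * δ)
    (Sig : Fin n → Matrix (Fin p) (Fin p) ℝ)
    (hSigUnit : ∀ i, IsUnit (Sig i))
    (M : Matrix (Fin p) (Fin p) ℝ) (R : Fin n → Matrix (Fin p) (Fin p) ℝ)
    (hinv : ∀ i, (Sig i)⁻¹ = M + R i)
    (hM : colL1 M ≤ CM) (hR : ∀ i, colL1 (R i) ≤ CR)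
    (hRsum : ∑ i, R i = 0)
    (S : Fin n → Matrix (Fin p) (Fin p) ℝ)
    (hS : ∀ i, supAbs (S i - Sig i) ≤ δ)
    (Ohat : Matrix (Fin p) (Fin p) ℝ) (Rhat : Fin n → Matrix (Fin p) (Fin p) ℝ)
    (hJNE : IsJNE S lam Ohat Rhat) :
    JNEObjective Ohat Rhat ≤ CM + CR ∧
      ∀ j : Fin p,
        vecL1 (fun a => Ohat a j) + (1 / (n : ℝ)) * ∑ i, vecL1 (fun a => Rhat i a j)
          ≤ CM + CR :=
  objective_bound_at_minimizer_general hn δ CM CR lam hlam Sig hSigUnit M R hinv hM hR hRsum S hS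
    Ohat Rhat hJNE
end
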